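/- arXiv:1603.00454 — 4 statements merged into one kernel-verified Lean document; each statement's English description precedes it below -/
import Mathlib

section
/- A subset A ⊆ Z^n is definable with parameters in (Z,+,0) if and only if A is a finite Boolean combination of cosets of subgroups of Z^n. -/
open FirstOrder

/-- Function symbols of the language of `(ℤ,+,0)`: one constant (`0`) and one binary function
(`+`). -/
def grpFunc : ℕ → Type
  | 0 => Unit
  | 2 => Unit
  | _ => Empty

/-- The language of `(ℤ,+,0)`. -/
def LangGrp : FirstOrder.Language := ⟨grpFunc, fun _ => Empty⟩

noncomputable instance : LangGrp.Structure ℤ where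
  funMap {n} f x :=
    match n, f with
    | 0, _ => 0
    | 2, _ => x 0 + x 1
  RelMap {n} r _ := r.elim

/-- The language of `(ℤ,+,<,0)`. -/
def LangOrdGrp : FirstOrder.Language := LangGrp.sum FirstOrder.Language.order

noncomputable instance : FirstOrder.Language.order.Structure ℤ :=
  FirstOrder.Language.orderStructure ℤ

noncomputable instance : LangOrdGrp.Structure ℤ :=
  inferInstanceAs ((LangGrp.sum FirstOrder.Language.order).Structure ℤ)

/-- Presburger sets: subsets of `ℤⁿ` definable with parameters in `(ℤ,+,<,0)`. -/
def IsPresburger {n : ℕ} (s : Set ((Fin n) → ℤ)) : Prop :=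
  Set.Definable (Set.univ : Set ℤ) LangOrdGrp s

/-- Definability with parameters in `(ℤ,+,0)`. -/
def IsGroupDefinable {n : ℕ} (s : Set ((Fin n) → ℤ)) : Prop :=
  Set.Definable (Set.univ : Set ℤ) LangGrp s

/-- The language of `(ℤ,+,0,A)` with `A` an `n`-ary predicate. -/
def LangGrpRel (n : ℕ) : FirstOrder.Language :=
  ⟨grpFunc, fun m => if m = n then Unit else Empty⟩

/-- The structure `(ℤ,+,0,A)`. -/
noncomputable def relStructure {n : ℕ} (A : Set (Fin n → ℤ)) : (LangGrpRel n).Structure ℤ where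
  funMap {m} f x :=
    match m, f with
    | 0, _ => 0
    | 2, _ => x 0 + x 1
  RelMap {m} _ x := if h : m = n then (fun i : Fin n => x (Fin.cast h.symm i)) ∈ A else False

/-- `A ⊆ ℤⁿ` defines the ordering if `ℕ` (the set of nonnegative integers) is definable with
parameters in the expansion `(ℤ,+,0,A)`. -/
def DefinesOrdering {n : ℕ} (A : Set (Fin n → ℤ)) : Prop :=
  letI := relStructure A
  Set.Definable (Set.univ : Set ℤ) (LangGrpRel n) {f : Fin 1 → ℤ | 0 ≤ f 0}

/-- A subset of `ℤ` is Presburger if the corresponding unary set is definable in `(ℤ,+,<,0)`. -/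
def IsPresburger1 (A : Set ℤ) : Prop := IsPresburger {f : Fin 1 → ℤ | f 0 ∈ A}

/-- A subset of `ℤ` is definable in `(ℤ,+,0)`. -/
def IsGroupDefinable1 (A : Set ℤ) : Prop := IsGroupDefinable {f : Fin 1 → ℤ | f 0 ∈ A}

/-- A subset of `ℤ` defines the ordering. -/
def DefinesOrdering1 (A : Set ℤ) : Prop := DefinesOrdering {f : Fin 1 → ℤ | f 0 ∈ A}

/-- Finite Boolean combinations of cosets of subgroups of `ℤⁿ`. -/
inductive BoolCombCosets {n : ℕ} : Set (Fin n → ℤ) → Prop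
  | coset (a : Fin n → ℤ) (H : AddSubgroup (Fin n → ℤ)) :
      BoolCombCosets ((a + ·) '' (H : Set (Fin n → ℤ)))
  | compl {s : Set (Fin n → ℤ)} : BoolCombCosets s → BoolCombCosets sᶜ
  | union {s t : Set (Fin n → ℤ)} : BoolCombCosets s → BoolCombCosets t → BoolCombCosets (s ∪ t)

/-!
Cosets of subgroups of `ℤⁿ`, together with `∅`, are exactly the affine subspaces of `ℤⁿ` over
`ℤ`. An atomic formula defines the zero set of an affine map, so by induction on formulas it
suffices that the Boolean algebra generated by affine subspaces of `ℤ^(m+1)` is stable under the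
projection `Fin.init`. In disjunctive normal form this comes down to projecting `C \ ⋃ Dᵢ` with
`C`, `Dᵢ` affine subspaces. If the direction of `C` contains no vertical vector, the projection is
injective on `C`. Otherwise each `Dᵢ` whose direction contains no vertical vector meets every
vertical line in at most one point, so it can be discarded, and what is left is invariant under a
common vertical period `v`; its projection is that of its finitely many slices
`x_last = r`, `0 ≤ r < |v_last|`, on each of which the projection is injective.

Conversely, `a + H` is the range of `c ↦ a + ∑ cᵢ gᵢ` for generators `gᵢ` of `H`, and every affine
map is definable because `(ℤ, +, 0)` defines negation.
-/

open MeasureTheory Set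

section BooleanAlgebra

variable {n : ℕ}

theorem isSetAlgebra_boolCombCosets : IsSetAlgebra {s : Set (Fin n → ℤ) | BoolCombCosets s} where
  empty_mem := by simpa using (BoolCombCosets.coset 0 ⊤).compl
  compl_mem _ := .compl
  union_mem _ _ := .union

theorem BoolCombCosets.empty : BoolCombCosets (∅ : Set (Fin n → ℤ)) :=
  isSetAlgebra_boolCombCosets.empty_mem

theorem BoolCombCosets.sdiff {s t : Set (Fin n → ℤ)} (hs : BoolCombCosets s)
    (ht : BoolCombCosets t) : BoolCombCosets (s \ t) :=
  isSetAlgebra_boolCombCosets.sdiff_mem hs ht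

theorem BoolCombCosets.iUnion {ι : Type*} [Finite ι] {s : ι → Set (Fin n → ℤ)}
    (hs : ∀ i, BoolCombCosets (s i)) : BoolCombCosets (⋃ i, s i) := by
  have := Fintype.ofFinite ι
  simpa using isSetAlgebra_boolCombCosets.biUnion_mem Finset.univ fun i _ => hs i

theorem coe_mk'_toIntSubmodule (a : Fin n → ℤ) (H : AddSubgroup (Fin n → ℤ)) :
    (AffineSubspace.mk' a H.toIntSubmodule : Set (Fin n → ℤ)) = (a + ·) '' (H : Set _) := by
  ext x
  rw [SetLike.mem_coe, AffineSubspace.mem_mk', image_add_left, mem_preimage, neg_add_eq_sub]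
  rfl

theorem AffineSubspace.boolCombCosets (Q : AffineSubspace ℤ (Fin n → ℤ)) :
    BoolCombCosets (Q : Set (Fin n → ℤ)) := by
  rcases (Q : Set (Fin n → ℤ)).eq_empty_or_nonempty with hQ | ⟨p, hp⟩
  · exact hQ ▸ BoolCombCosets.empty
  · rw [← AffineSubspace.mk'_eq hp, ← Q.direction.toAddSubgroup_toIntSubmodule,
      coe_mk'_toIntSubmodule]
    exact .coset _ _

theorem BoolCombCosets.mem_generateSetAlgebra {s : Set (Fin n → ℤ)} (hs : BoolCombCosets s) :
    s ∈ generateSetAlgebra (range ((↑) : AffineSubspace ℤ (Fin n → ℤ) → Set (Fin n → ℤ))) := by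
  induction hs with
  | coset a H => exact .base _ ⟨_, coe_mk'_toIntSubmodule a H⟩
  | compl _ ih => exact .compl _ ih
  | union _ _ ih₁ ih₂ => exact .union _ _ ih₁ ih₂

end BooleanAlgebra

section Projection

variable {G : Type*} [AddCommGroup G]

theorem exists_ne_zero_forall_zsmul_mem {ι : Type*} [Finite ι] (v : G) (E : ι → Submodule ℤ G)
    (h : ∀ i, ∃ t ≠ (0 : ℤ), t • v ∈ E i) : ∃ t ≠ (0 : ℤ), ∀ i, t • v ∈ E i := by
  have := Fintype.ofFinite ι
  choose t ht hmem using h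
  refine ⟨∏ i, t i, Finset.prod_ne_zero_iff.2 fun i _ => ht i, fun i => ?_⟩
  obtain ⟨c, hc⟩ := Finset.dvd_prod_of_mem t (Finset.mem_univ i)
  rw [hc, mul_comm, mul_smul]
  exact (E i).smul_mem c (hmem i)

theorem exists_zsmul_add_notMem_iUnion {ι : Type*} [Finite ι] (D : ι → AffineSubspace ℤ G)
    {v : G} (hD : ∀ i (s : ℤ), s • v ∈ (D i).direction → s = 0) (z : G) :
    ∃ s : ℤ, s • v + z ∉ ⋃ i, (D i : Set G) := by
  have hfin : (⋃ i, {s : ℤ | s • v + z ∈ D i}).Finite := by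
    refine finite_iUnion fun i => Subsingleton.finite fun s hs s' hs' => ?_
    have hdir := AffineSubspace.vsub_mem_direction hs hs'
    rw [vsub_eq_sub, add_sub_add_right_eq_sub, ← sub_smul] at hdir
    exact sub_eq_zero.1 (hD i _ hdir)
  obtain ⟨s, hs⟩ := hfin.exists_notMem
  exact ⟨s, by simpa using hs⟩

theorem zsmul_add_mem_sdiff_iUnion {ι : Type*} {C : AffineSubspace ℤ G}
    {D : ι → AffineSubspace ℤ G} {v z : G} (hC : v ∈ C.direction)
    (hD : ∀ i, v ∈ (D i).direction) (hz : z ∈ (C : Set G) \ ⋃ i, (D i : Set G)) (s : ℤ) :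
    s • v + z ∈ (C : Set G) \ ⋃ i, (D i : Set G) := by
  refine ⟨(C.vadd_mem_iff_mem_of_mem_direction (C.direction.smul_mem s hC)).2 hz.1, ?_⟩
  simp only [mem_iUnion, not_exists]
  exact fun i hi => hz.2 <| mem_iUnion.2
    ⟨i, ((D i).vadd_mem_iff_mem_of_mem_direction ((D i).direction.smul_mem s (hD i))).1 hi⟩

theorem image_sdiff_iUnion_eq_of_zsmul_mem_direction {H ι : Type*} [Finite ι] (f : G → H)
    {C : AffineSubspace ℤ G} {D : ι → AffineSubspace ℤ G} {p : ι → Prop} {v : G}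
    (hf : ∀ (s : ℤ) z, f (s • v + z) = f z) (hC : v ∈ C.direction)
    (hp : ∀ i : {i // p i}, v ∈ (D i).direction)
    (hnp : ∀ i, ¬p i → ∀ s : ℤ, s • v ∈ (D i).direction → s = 0) :
    f '' ((C : Set G) \ ⋃ i, (D i : Set G)) =
      f '' ((C : Set G) \ ⋃ i : {i // p i}, (D i : Set G)) := by
  refine (image_mono (sdiff_subset_sdiff_right
    (iUnion_subset fun i : {i // p i} => subset_iUnion (fun j => (D j : Set G)) i.1))).antisymm ?_
  rintro _ ⟨z, hz, rfl⟩
  obtain ⟨s, hs⟩ := exists_zsmul_add_notMem_iUnion (fun i : {i // ¬p i} => D i)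
    (fun i => hnp i i.2) z
  have hmem := zsmul_add_mem_sdiff_iUnion hC hp hz s
  refine ⟨s • v + z, ⟨hmem.1, ?_⟩, hf s z⟩
  rw [mem_iUnion]
  rintro ⟨i, hi⟩
  by_cases hpi : p i
  · exact hmem.2 (mem_iUnion.2 ⟨⟨i, hpi⟩, hi⟩)
  · exact hs (mem_iUnion.2 ⟨⟨i, hpi⟩, hi⟩)

theorem AffineSubspace.boolCombCosets_image {m : ℕ} (π : G →ₗ[ℤ] (Fin m → ℤ))
    (Q : AffineSubspace ℤ G) : BoolCombCosets (π '' Q) := by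
  simpa using (Q.map π.toAffineMap).boolCombCosets

theorem boolCombCosets_image_sdiff_of_injOn {m : ℕ} {ι : Type*} [Finite ι]
    (π : G →ₗ[ℤ] (Fin m → ℤ)) (C : AffineSubspace ℤ G) (D : ι → AffineSubspace ℤ G)
    (hπ : InjOn π C) : BoolCombCosets (π '' ((C : Set G) \ ⋃ i, (D i : Set G))) := by
  rw [hπ.image_sdiff, inter_iUnion, image_iUnion]
  refine (C.boolCombCosets_image π).sdiff (.iUnion fun i => ?_)
  exact (C ⊓ D i).boolCombCosets_image π

end Projection

section NormalForm

variable {k V : Type*} [Ring k] [AddCommGroup V] [Module k V]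

theorem exists_biInter_eq_sdiff_iUnion {a : Set (Set V)}
    (ha : ∀ t ∈ a, t ∈ range ((↑) : AffineSubspace k V → Set V) ∨
      tᶜ ∈ range ((↑) : AffineSubspace k V → Set V)) :
    ∃ (C : AffineSubspace k V)
      (D : {t : a // (t : Set V) ∉ range ((↑) : AffineSubspace k V → Set V)} → AffineSubspace k V),
      ⋂ t ∈ a, t = (C : Set V) \ ⋃ i, (D i : Set V) := by
  choose C hC using fun t : {t : a // (t : Set V) ∈ range ((↑) : AffineSubspace k V → Set V)} => t.2
  choose D hD using fun t : {t : a // (t : Set V) ∉ range ((↑) : AffineSubspace k V → Set V)} =>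
    (ha t t.1.2).resolve_left t.2
  refine ⟨⨅ t, C t, D, ?_⟩
  ext x
  simp only [mem_iInter, mem_sdiff, AffineSubspace.coe_iInf, mem_iUnion, hC, hD, mem_compl_iff,
    not_exists, not_not]
  refine ⟨fun hx => ⟨fun t => hx t t.1.2, fun t => hx t t.1.2⟩, fun hx t ht => ?_⟩
  by_cases htA : t ∈ range ((↑) : AffineSubspace k V → Set V)
  · exact hx.1 ⟨⟨t, ht⟩, htA⟩
  · exact hx.2 ⟨⟨t, ht⟩, htA⟩

end NormalForm

section DropLast

variable {m : ℕ}

theorem eq_of_init_eq_of_apply_last_eq {α : Type*} {x y : Fin (m + 1) → α}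
    (h : Fin.init x = Fin.init y) (hlast : x (Fin.last m) = y (Fin.last m)) : x = y := by
  rw [← Fin.snoc_init_self x, ← Fin.snoc_init_self y, h, hlast]

theorem sub_eq_zsmul_single_last_of_init_eq {x y : Fin (m + 1) → ℤ}
    (h : Fin.init x = Fin.init y) :
    x - y = (x (Fin.last m) - y (Fin.last m)) • Pi.single (Fin.last m) 1 := by
  ext i
  induction i using Fin.lastCases with
  | last => simp
  | cast j => simpa [Fin.init, Fin.castSucc_ne_last, sub_eq_zero] using congrFun h j

theorem init_zsmul_add {v : Fin (m + 1) → ℤ} (hv : Fin.init v = 0) (s : ℤ)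
    (z : Fin (m + 1) → ℤ) : Fin.init (s • v + z) = Fin.init z := by
  funext j
  simp [Fin.init, show v j.castSucc = 0 from congrFun hv j]

def lastSlice (m : ℕ) (r : ℤ) : AffineSubspace ℤ (Fin (m + 1) → ℤ) :=
  (affineSpan ℤ {r}).comap (LinearMap.proj (Fin.last m)).toAffineMap

theorem mem_lastSlice {r : ℤ} {x : Fin (m + 1) → ℤ} : x ∈ lastSlice m r ↔ x (Fin.last m) = r := by
  simp [lastSlice, AffineSubspace.mem_comap, AffineSubspace.mem_affineSpan_singleton]

theorem init_injOn_lastSlice (r : ℤ) : InjOn Fin.init (lastSlice m r : Set (Fin (m + 1) → ℤ)) :=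
  fun _ hx _ hy h =>
    eq_of_init_eq_of_apply_last_eq h ((mem_lastSlice.1 hx).trans (mem_lastSlice.1 hy).symm)

theorem init_image_eq_iUnion_lastSlice {S : Set (Fin (m + 1) → ℤ)} {v : Fin (m + 1) → ℤ}
    (hv : Fin.init v = 0) (hv0 : v (Fin.last m) ≠ 0) (hS : ∀ x ∈ S, ∀ s : ℤ, s • v + x ∈ S) :
    Fin.init '' S = ⋃ r : Ico 0 |v (Fin.last m)|, Fin.init '' (S ∩ lastSlice m r) := by
  refine (iUnion_subset fun r => image_mono inter_subset_left).antisymm' ?_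
  rintro _ ⟨z, hz, rfl⟩
  set t := v (Fin.last m)
  refine mem_iUnion.2 ⟨⟨z (Fin.last m) % t, Int.emod_nonneg _ hv0, Int.emod_lt_abs _ hv0⟩,
    -(z (Fin.last m) / t) • v + z, ⟨hS z hz _, mem_lastSlice.2 ?_⟩, init_zsmul_add hv _ z⟩
  simp only [Pi.add_apply, Pi.smul_apply, smul_eq_mul, Int.emod_def, t]
  ring

theorem boolCombCosets_init_image_sdiff {ι : Type*} [Finite ι]
    (C : AffineSubspace ℤ (Fin (m + 1) → ℤ)) (D : ι → AffineSubspace ℤ (Fin (m + 1) → ℤ)) :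
    BoolCombCosets
      (Fin.init '' ((C : Set (Fin (m + 1) → ℤ)) \ ⋃ i, (D i : Set (Fin (m + 1) → ℤ)))) := by
  let e : Fin (m + 1) → ℤ := Pi.single (Fin.last m) 1
  let π : (Fin (m + 1) → ℤ) →ₗ[ℤ] (Fin m → ℤ) := LinearMap.funLeft ℤ ℤ Fin.castSucc
  by_cases hC : ∃ t ≠ (0 : ℤ), t • e ∈ C.direction
  · obtain ⟨t₀, ht₀, hCt₀⟩ := hC
    let p i := ∃ t ≠ (0 : ℤ), t • e ∈ (D i).direction
    obtain ⟨t₁, ht₁, hDt₁⟩ :=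
      exists_ne_zero_forall_zsmul_mem e (fun i : {i // p i} => (D i).direction) fun i => i.2
    set v := (t₁ * t₀) • e with hv
    have hvC : v ∈ C.direction := by rw [hv, mul_smul]; exact C.direction.smul_mem _ hCt₀
    have hvD : ∀ i : {i // p i}, v ∈ (D i).direction := fun i => by
      rw [hv, mul_comm, mul_smul]; exact (D i).direction.smul_mem _ (hDt₁ i)
    have hthin : ∀ i, ¬p i → ∀ s : ℤ, s • v ∈ (D i).direction → s = 0 := fun i hi s hs =>
      by_contra fun hs0 =>
        hi ⟨s * (t₁ * t₀), mul_ne_zero hs0 (mul_ne_zero ht₁ ht₀), by rwa [mul_smul]⟩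
    have hvinit : Fin.init v = 0 := by
      ext j; simp [v, e, Fin.init, Fin.castSucc_ne_last]
    have hvlast : v (Fin.last m) ≠ 0 := by simp [v, e, ht₀, ht₁]
    rw [image_sdiff_iUnion_eq_of_zsmul_mem_direction _ (init_zsmul_add hvinit) hvC hvD hthin,
      init_image_eq_iUnion_lastSlice hvinit hvlast
      fun x hx s => zsmul_add_mem_sdiff_iUnion hvC hvD hx s]
    refine .iUnion fun r => ?_
    rw [← inter_sdiff_right_comm]
    exact boolCombCosets_image_sdiff_of_injOn π (C ⊓ lastSlice m r) _
      ((init_injOn_lastSlice r).mono inter_subset_right)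
  · refine boolCombCosets_image_sdiff_of_injOn π C D fun x hx y hy hxy => ?_
    have hdir := AffineSubspace.vsub_mem_direction hx hy
    rw [vsub_eq_sub, sub_eq_zsmul_single_last_of_init_eq hxy] at hdir
    exact eq_of_init_eq_of_apply_last_eq hxy (sub_eq_zero.1 (not_not.1 fun h => hC ⟨_, h, hdir⟩))

theorem BoolCombCosets.init_image {S : Set (Fin (m + 1) → ℤ)} (hS : BoolCombCosets S) :
    BoolCombCosets (Fin.init '' S) := by
  obtain ⟨A, hA, ha, hlit, rfl⟩ := mem_generateSetAlgebra_elim hS.mem_generateSetAlgebra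
  have := hA.to_subtype
  rw [biUnion_eq_iUnion, image_iUnion]
  refine .iUnion fun a => ?_
  have := (ha a a.2).to_subtype
  obtain ⟨C, D, hCD⟩ := exists_biInter_eq_sdiff_iUnion (hlit a a.2)
  rw [hCD]
  exact boolCombCosets_init_image_sdiff C D

end DropLast

section Formulas

open Language

theorem exists_affineMap_realize_eq {α : Type*} (t : LangGrp[[(univ : Set ℤ)]].Term α) :
    ∃ f : (α → ℤ) →ᵃ[ℤ] ℤ, ∀ w, t.realize w = f w := by
  induction t with
  | var i => exact ⟨(LinearMap.proj i).toAffineMap, fun _ => rfl⟩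
  | @func l f ts ih =>
    choose g hg using ih
    match l, f with
    | 0, .inl _ => exact ⟨0, fun _ => rfl⟩
    | 0, .inr c => exact ⟨AffineMap.const ℤ _ (c : ℤ), fun _ => rfl⟩
    | 2, .inl _ => exact ⟨g 0 + g 1, fun w => congrArg₂ (· + ·) (hg 0 w) (hg 1 w)⟩
    | 1, .inl f | _ + 3, .inl f => exact f.elim
    | _ + 1, .inr f => exact f.elim

theorem boolCombCosets_setOf_affineMap_eq {N : ℕ} (f g : (Fin N → ℤ) →ᵃ[ℤ] ℤ) :
    BoolCombCosets {x | f x = g x} := by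
  convert ((affineSpan ℤ {0}).comap (f - g)).boolCombCosets using 1
  ext x
  simp [sub_eq_zero]

def realizeSet {n k : ℕ} (φ : LangGrp[[(univ : Set ℤ)]].BoundedFormula (Fin n) k) :
    Set (Fin (n + k) → ℤ) :=
  {x | φ.Realize (x ∘ Fin.castAdd k) (x ∘ Fin.natAdd n)}

theorem compl_init_image_compl {m : ℕ} {α : Type*} (S : Set (Fin (m + 1) → α)) :
    (Fin.init '' Sᶜ)ᶜ = {x | ∀ a, Fin.snoc x a ∈ S} := by
  refine Set.ext fun x => ⟨fun h a => by_contra fun ha => h ⟨_, ha, by simp⟩, ?_⟩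
  rintro h ⟨y, hy, rfl⟩
  exact hy (Fin.snoc_init_self y ▸ h (y (Fin.last m)))

theorem realizeSet_all {n k : ℕ} (φ : LangGrp[[(univ : Set ℤ)]].BoundedFormula (Fin n) (k + 1)) :
    realizeSet φ.all = (Fin.init '' (realizeSet (k := k + 1) φ)ᶜ)ᶜ := by
  rw [compl_init_image_compl]
  ext x
  simp only [realizeSet, mem_ofPred_eq, BoundedFormula.realize_all]
  refine forall_congr' fun a => ?_
  have h₁ : (Fin.snoc x a : Fin (n + k + 1) → ℤ) ∘ Fin.castAdd (k + 1) = x ∘ Fin.castAdd k := by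
    ext i; simp
  have h₂ : (Fin.snoc x a : Fin (n + k + 1) → ℤ) ∘ Fin.natAdd n =
      Fin.snoc (x ∘ Fin.natAdd n) a := by
    ext i
    induction i using Fin.lastCases with
    | last => simp
    | cast j => simp only [Function.comp_apply, Fin.natAdd_castSucc, Fin.snoc_castSucc]
  change _ ↔ φ.Realize (Fin.snoc x a ∘ Fin.castAdd (k + 1)) (Fin.snoc x a ∘ Fin.natAdd n)
  rw [h₁, h₂]

theorem boolCombCosets_realizeSet {n : ℕ} :
    ∀ {k} (φ : LangGrp[[(univ : Set ℤ)]].BoundedFormula (Fin n) k),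
      BoolCombCosets (realizeSet φ)
  | _, .falsum => by simpa [realizeSet, BoundedFormula.Realize] using BoolCombCosets.empty
  | k, .equal t₁ t₂ => by
    obtain ⟨f₁, hf₁⟩ := exists_affineMap_realize_eq t₁
    obtain ⟨f₂, hf₂⟩ := exists_affineMap_realize_eq t₂
    let σ := (LinearMap.funLeft ℤ ℤ (finSumFinEquiv (m := n) (n := k))).toAffineMap
    convert boolCombCosets_setOf_affineMap_eq (f₁.comp σ) (f₂.comp σ) using 1
    have hσ : ∀ x : Fin (n + k) → ℤ, Sum.elim (x ∘ Fin.castAdd k) (x ∘ Fin.natAdd n) = σ x :=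
      fun x => by ext (i | i) <;> simp [σ]
    ext x
    change t₁.realize _ = t₂.realize _ ↔ _
    rw [hf₁, hf₂, hσ]
    rfl
  | _, .rel R _ => by rcases R with R | R <;> exact R.elim
  | _, .imp φ ψ => by
    have : realizeSet (φ.imp ψ) = (realizeSet φ)ᶜ ∪ realizeSet ψ := by
      ext x; simp [realizeSet, imp_iff_not_or]
    rw [this]
    exact (boolCombCosets_realizeSet φ).compl.union (boolCombCosets_realizeSet ψ)
  | _, .all φ => by
    rw [realizeSet_all]
    exact (boolCombCosets_realizeSet φ).compl.init_image.compl

end Formulas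

theorem IsGroupDefinable.boolCombCosets {n : ℕ} {A : Set (Fin n → ℤ)} (h : IsGroupDefinable A) :
    BoolCombCosets A := by
  obtain ⟨φ, rfl⟩ := h
  have hφ : realizeSet (k := 0) φ = ofPred φ.Realize := by
    ext x
    change Language.BoundedFormula.Realize φ x (x ∘ Fin.natAdd n) ↔ Language.Formula.Realize φ x
    exact iff_of_eq (congrArg _ (Subsingleton.elim _ _))
  exact hφ ▸ boolCombCosets_realizeSet φ

section Definability

variable {α : Type*}

theorem definableFun_add {f g : (α → ℤ) → ℤ} (hf : (univ : Set ℤ).DefinableFun LangGrp f)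
    (hg : (univ : Set ℤ).DefinableFun LangGrp g) :
    (univ : Set ℤ).DefinableFun LangGrp fun v => f v + g v :=
  (DefinableFun.of_empty (DefinableFun.fun_symbol (L := LangGrp) (n := 2) ())).comp
    (g := fun v => ![f v, g v]) (by simp [DefinableMap, Fin.forall_fin_two, hf, hg])

theorem definableFun_neg [Finite α] {f : (α → ℤ) → ℤ}
    (hf : (univ : Set ℤ).DefinableFun LangGrp f) :
    (univ : Set ℤ).DefinableFun LangGrp fun v => -f v := by
  have h := (definableFun_add (hf.comp (g := fun w : Option α → ℤ => w ∘ some)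
    fun _ => DefinableFun.proj LangGrp) (DefinableFun.proj LangGrp (i := none))).ofPred_eq_const
    (mem_univ 0)
  unfold DefinableFun
  convert h using 2
  ext w
  simp [Function.tupleGraph, neg_eq_iff_add_eq_zero, add_comm]

def definableFunctions (α : Type*) [Finite α] : AddSubgroup ((α → ℤ) → ℤ) where
  carrier := {f | (univ : Set ℤ).DefinableFun LangGrp f}
  zero_mem' := LangGrp.definableFun_const α (mem_univ 0)
  add_mem' := definableFun_add
  neg_mem' := definableFun_neg

theorem definableFun_affineMap [Fintype α] (f : (α → ℤ) →ᵃ[ℤ] ℤ) :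
    (univ : Set ℤ).DefinableFun LangGrp f := by
  classical
  have hlin : ⇑f.linear ∈ definableFunctions α := by
    have : ⇑f.linear = ∑ i, f.linear (fun j => if i = j then 1 else 0) • fun v : α → ℤ => v i := by
      ext v
      simp [LinearMap.pi_apply_eq_sum_univ f.linear v, mul_comm]
    rw [this]
    exact sum_mem fun i _ => zsmul_mem (DefinableFun.proj LangGrp (i := i)) _
  rw [AffineMap.decomp f]
  exact add_mem hlin (LangGrp.definableFun_const α (mem_univ _))

end Definability

theorem isGroupDefinable_range_affineMap {β : Type*} [Fintype β] {n : ℕ}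
    (F : (β → ℤ) →ᵃ[ℤ] (Fin n → ℤ)) : IsGroupDefinable (range F) := by
  have hgraph : (univ : Set ℤ).Definable LangGrp
      {w : Fin n ⊕ β → ℤ | ∀ j, w (.inl j) = F (w ∘ .inr) j} := by
    rw [ofPred_forall]
    exact definable_iInter_of_finite fun j => (DefinableFun.proj LangGrp).ofPred_eq
      (definableFun_affineMap (((LinearMap.proj j).toAffineMap.comp F).comp
        (LinearMap.funLeft ℤ ℤ Sum.inr).toAffineMap))
  unfold IsGroupDefinable
  convert hgraph.exists_of_finite using 2
  ext x
  simp [funext_iff, eq_comm]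

theorem isGroupDefinable_coset {n : ℕ} (a : Fin n → ℤ) (H : AddSubgroup (Fin n → ℤ)) :
    IsGroupDefinable ((a + ·) '' (H : Set (Fin n → ℤ))) := by
  obtain ⟨s, hs⟩ := IsNoetherian.noetherian H.toIntSubmodule
  let G := Fintype.linearCombination ℤ ((↑) : s → Fin n → ℤ)
  have hG : ∀ h, h ∈ H ↔ ∃ y, G y = h := fun h => by
    rw [← LinearMap.mem_range, Fintype.range_linearCombination, Subtype.range_coe, hs]
    rfl
  have hrange : (a + ·) '' (H : Set (Fin n → ℤ)) =
      range ⇑(AffineMap.const ℤ (s → ℤ) a + G.toAffineMap) := by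
    ext x
    simp [hG, eq_neg_add_iff_add_eq]
  rw [hrange]
  exact isGroupDefinable_range_affineMap _

theorem BoolCombCosets.isGroupDefinable {n : ℕ} {A : Set (Fin n → ℤ)} (h : BoolCombCosets A) :
    IsGroupDefinable A := by
  induction h with
  | coset a H => exact isGroupDefinable_coset a H
  | compl _ ih => exact Set.Definable.compl ih
  | union _ _ ih₁ ih₂ => exact Set.Definable.union ih₁ ih₂

/-- a subset of `ℤⁿ` is definable in `(ℤ,+,0)` iff it is a finite Boolean
combination of cosets of subgroups of `ℤⁿ`. -/
theorem stmt3 {n : ℕ} (A : Set (Fin n → ℤ)) :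
    IsGroupDefinable A ↔ BoolCombCosets A :=
  ⟨IsGroupDefinable.boolCombCosets, BoolCombCosets.isGroupDefinable⟩
end

section
/- With C, α, Φ as above, for any subset X ⊆ C one has rk(Φ(X)) = rk(X), where rk denotes the rank of a subset (the least k such that the set is covered by finitely many cosets of rank at most k). -/
/-!
The inverse of `Φ` is the injective affine map `t ↦ c + L t`, where `L` takes `t` to the linear
combination of the basis vectors with coefficients `t`. An injective affine map sends a coset
`a + H` to the coset `(c + L a) + L(H)` of the same rank, and pulls a coset `a + H` back into a
coset of `L⁻¹(H) ≅ L(L⁻¹(H)) ≤ H`, of rank at most that of `H`. Hence a set inside the image of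
the map is covered by finitely many cosets of rank `≤ j` exactly when its preimage is.
-/

/-- A coset of a subgroup of `ℤⁿ`. -/
def IsCoset {n : ℕ} (S : Set (Fin n → ℤ)) : Prop :=
  ∃ (a : Fin n → ℤ) (H : AddSubgroup (Fin n → ℤ)), S = (a + ·) '' (H : Set (Fin n → ℤ))

/-- A coset of a rank-`k` subgroup of `ℤⁿ`. -/
def IsCosetOfRank {n : ℕ} (k : ℕ) (S : Set (Fin n → ℤ)) : Prop :=
  ∃ (a : Fin n → ℤ) (H : AddSubgroup (Fin n → ℤ)),
    Module.finrank ℤ H = k ∧ S = (a + ·) '' (H : Set (Fin n → ℤ))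

/-- `X` is contained in a finite union of cosets of subgroups of rank at most `k`. -/
def CoveredByRank {n : ℕ} (X : Set (Fin n → ℤ)) (k : ℕ) : Prop :=
  ∃ (m : ℕ) (C : Fin m → Set (Fin n → ℤ)),
    (∀ i, ∃ ki ≤ k, IsCosetOfRank ki (C i)) ∧ X ⊆ ⋃ i, C i

open Classical in
/-- The rank of a subset of `ℤⁿ`: the least `k` such that `X` is covered by finitely many cosets
of rank at most `k`, with `rk(∅) = -1`. -/
noncomputable def setRank {n : ℕ} (X : Set (Fin n → ℤ)) : ℤ :=
  if X = ∅ then -1 else ((sInf {k : ℕ | CoveredByRank X k} : ℕ) : ℤ)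

variable {n k : ℕ}

/-- The parametrization of the coset `c + G` by `ℤᵏ` determined by a basis of `G`. -/
noncomputable def cosetParam (c : Fin n → ℤ) (G : AddSubgroup (Fin n → ℤ))
    (α : Module.Basis (Fin k) ℤ G) : (Fin k → ℤ) → (Fin n → ℤ) :=
  fun t => c + ∑ i : Fin k, t i • ((α i : Fin n → ℤ))

theorem AddSubgroup.linearCombination_coe_basis {M ι : Type*} [AddCommGroup M] [Fintype ι]
    {G : AddSubgroup M} (α : Module.Basis ι ℤ G) :
    ⇑(Fintype.linearCombination ℤ (fun i => (α i : M))) = Subtype.val ∘ α.equivFun.symm := by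
  funext t
  simp [Module.Basis.equivFun_symm_apply, Fintype.linearCombination_apply]

section AffineEmbedding

variable {m p : ℕ} (L : (Fin m → ℤ) →ₗ[ℤ] (Fin p → ℤ)) (c : Fin p → ℤ)

theorem IsCosetOfRank.image_add_linear (hL : Function.Injective L) {r : ℕ}
    {S : Set (Fin m → ℤ)} (hS : IsCosetOfRank r S) : IsCosetOfRank r ((c + L ·) '' S) := by
  obtain ⟨a, H, rfl, rfl⟩ := hS
  refine ⟨c + L a, (H.toIntSubmodule.map L).toAddSubgroup,
    (Submodule.equivMapOfInjective L hL H.toIntSubmodule).finrank_eq.symm, ?_⟩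
  simp only [Set.image_image, Submodule.coe_toAddSubgroup, Submodule.map_coe,
    AddSubgroup.coe_toIntSubmodule, map_add, add_assoc]

theorem IsCosetOfRank.exists_preimage_subset (hL : Function.Injective L) {r : ℕ}
    {S : Set (Fin p → ℤ)} (hS : IsCosetOfRank r S) :
    ∃ s ≤ r, ∃ D, IsCosetOfRank s D ∧ (c + L ·) ⁻¹' S ⊆ D := by
  obtain ⟨a, H, rfl, rfl⟩ := hS
  set K := H.toIntSubmodule.comap L
  have hrank : Module.finrank ℤ K ≤ Module.finrank ℤ H := by
    rw [(Submodule.equivMapOfInjective L hL K).finrank_eq]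
    exact Submodule.finrank_mono (Submodule.map_comap_le L _)
  refine ⟨_, hrank, ?_⟩
  rcases Set.eq_empty_or_nonempty ((c + L ·) ⁻¹' ((a + ·) '' (H : Set (Fin p → ℤ))))
    with hempty | ⟨t₀, h₀, hh₀, ht₀⟩
  · exact ⟨(0 + ·) '' (K.toAddSubgroup : Set (Fin m → ℤ)), ⟨0, _, rfl, rfl⟩,
      hempty ▸ Set.empty_subset _⟩
  refine ⟨(t₀ + ·) '' (K.toAddSubgroup : Set (Fin m → ℤ)), ⟨t₀, _, rfl, rfl⟩, ?_⟩
  rintro t ⟨h, hh, hth⟩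
  refine ⟨t - t₀, ?_, add_sub_cancel t₀ t⟩
  have hdiff : L (t - t₀) = h - h₀ := by
    rw [map_sub]
    linear_combination ht₀ - hth
  show L (t - t₀) ∈ H
  rw [hdiff]
  exact sub_mem hh hh₀

theorem CoveredByRank.image_add_linear (hL : Function.Injective L) {Y : Set (Fin m → ℤ)}
    {j : ℕ} (h : CoveredByRank Y j) : CoveredByRank ((c + L ·) '' Y) j := by
  obtain ⟨q, C, hC, hY⟩ := h
  refine ⟨q, fun i => (c + L ·) '' C i, fun i => ?_, ?_⟩
  · obtain ⟨r, hr, hCi⟩ := hC i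
    exact ⟨r, hr, hCi.image_add_linear L c hL⟩
  · rw [← Set.image_iUnion]
    exact Set.image_mono hY

theorem CoveredByRank.preimage_add_linear (hL : Function.Injective L) {X : Set (Fin p → ℤ)}
    {j : ℕ} (h : CoveredByRank X j) : CoveredByRank ((c + L ·) ⁻¹' X) j := by
  obtain ⟨q, C, hC, hX⟩ := h
  choose r hr hCr using hC
  choose s hs D hD hsub using fun i => (hCr i).exists_preimage_subset L c hL
  refine ⟨q, D, fun i => ⟨s i, (hs i).trans (hr i), hD i⟩, ?_⟩
  calc (c + L ·) ⁻¹' X ⊆ (c + L ·) ⁻¹' ⋃ i, C i := Set.preimage_mono hX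
    _ = ⋃ i, (c + L ·) ⁻¹' C i := Set.preimage_iUnion
    _ ⊆ ⋃ i, D i := Set.iUnion_mono hsub

theorem setRank_preimage_add_linear (hL : Function.Injective L) {X : Set (Fin p → ℤ)}
    (hX : X ⊆ Set.range (c + L ·)) : setRank ((c + L ·) ⁻¹' X) = setRank X := by
  have himage : (c + L ·) '' ((c + L ·) ⁻¹' X) = X := Set.image_preimage_eq_of_subset hX
  have hcovered : ∀ j, CoveredByRank ((c + L ·) ⁻¹' X) j ↔ CoveredByRank X j := fun j =>
    ⟨fun h => himage ▸ h.image_add_linear L c hL, fun h => h.preimage_add_linear L c hL⟩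
  have hempty : (c + L ·) ⁻¹' X = ∅ ↔ X = ∅ :=
    ⟨fun h => by rw [← himage, h, Set.image_empty], fun h => by rw [h, Set.preimage_empty]⟩
  simp only [setRank, hempty, hcovered]

end AffineEmbedding

/-- the parametrization of a coset by `ℤᵏ` preserves the rank of arbitrary
subsets. -/
theorem stmt8 (c : Fin n → ℤ) (G : AddSubgroup (Fin n → ℤ)) (α : Module.Basis (Fin k) ℤ G)
    (X : Set (Fin n → ℤ)) (hX : X ⊆ (c + ·) '' (G : Set (Fin n → ℤ))) :
    setRank (cosetParam c G α ⁻¹' X) = setRank X := by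
  set L := Fintype.linearCombination ℤ (fun i => (α i : Fin n → ℤ))
  have hparam : cosetParam c G α = (c + L ·) := by
    funext t
    simp [L, cosetParam, Fintype.linearCombination_apply]
  have hL : Function.Injective L := by
    rw [AddSubgroup.linearCombination_coe_basis]
    exact Subtype.val_injective.comp α.equivFun.symm.injective
  have hrange : Set.range (c + L ·) = (c + ·) '' (G : Set (Fin n → ℤ)) := by
    rw [← Function.comp_def (c + ·) L, Set.range_comp, AddSubgroup.linearCombination_coe_basis,
      α.equivFun.symm.surjective.range_comp, Subtype.range_coe]
  rw [hparam]
  exact setRank_preimage_add_linear L c hL (hrange ▸ hX)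
end

section
/- If Q, P_1, ..., P_k are polyhedra in R^n with Q ⊆ P_1 ∪ ... ∪ P_k and Q has infinite inradius, then some P_i has infinite inradius. -/
open scoped ENNReal

/-- The inradius of a subset of `ℝⁿ`: the supremum of radii of closed balls contained in it
(possibly `∞`). -/
noncomputable def inradius {n : ℕ} (P : Set (EuclideanSpace ℝ (Fin n))) : ℝ≥0∞ :=
  ⨆ (x : EuclideanSpace ℝ (Fin n)) (r : NNReal) (_ : Metric.closedBall x (r : ℝ) ⊆ P),
    (r : ℝ≥0∞)

/-- A half-space in `ℝⁿ`: one of the four sets determined by a non-constant affine map. -/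
def IsHalfSpace {n : ℕ} (S : Set (EuclideanSpace ℝ (Fin n))) : Prop :=
  ∃ f : EuclideanSpace ℝ (Fin n) →ᵃ[ℝ] ℝ, (¬ ∃ c, ∀ x, f x = c) ∧
    (S = {x | 0 < f x} ∨ S = {x | f x < 0} ∨ S = {x | 0 ≤ f x} ∨ S = {x | f x ≤ 0})

/-- A polyhedron in `ℝⁿ`: a finite intersection of (open or closed) half-spaces. -/
def IsPolyhedron {n : ℕ} (S : Set (EuclideanSpace ℝ (Fin n))) : Prop :=
  ∃ (m : ℕ) (H : Fin m → Set (EuclideanSpace ℝ (Fin n))),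
    (∀ i, IsHalfSpace (H i)) ∧ S = ⋂ i, H i

open Metric Set Finset
open scoped RealInnerProductSpace

/-!
A convex set of finite inradius has a closure of finite inradius, and a closed convex set
containing no ball of radius `ρ` can be escaped from any point: every point `y` outside it has,
within distance `R`, the centre of a ball of radius `R` missing it (push `y` away along a
separating functional). Escaping the closures of `P₁, …, Pₖ` one after the other from the centre
of a ball of radius `(2ᵏ - 1) ρ` inside `Q` leaves a point of `Q` outside every `Pᵢ`.
-/

section FiniteDimensional

variable {V : Type*} [NormedAddCommGroup V] [NormedSpace ℝ V] [FiniteDimensional ℝ V]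

theorem Convex.interior_closure_eq_interior {s : Set V} (hs : Convex ℝ s) :
    interior (closure s) = interior s := by
  by_cases hint : (interior s).Nonempty
  · exact hs.interior_closure_eq_interior_of_nonempty_interior hint
  refine (interior_mono subset_closure).antisymm' fun x hx => absurd ?_ hint
  rw [hs.interior_nonempty_iff_affineSpan_eq_top, eq_top_iff]
  have hclosure : closure s ⊆ affineSpan ℝ s :=
    closure_minimal (subset_affineSpan ℝ s) (AffineSubspace.closed_of_finiteDimensional _)
  calc ⊤ = affineSpan ℝ (closure s) := (affineSpan_eq_top_of_nonempty_interior
      ⟨x, interior_mono (subset_convexHull ℝ _) hx⟩).symm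
    _ ≤ affineSpan ℝ s := affineSpan_le.mpr hclosure

theorem Convex.closedBall_subset_of_closedBall_subset_closure {s : Set V} (hs : Convex ℝ s)
    {x : V} {r r' : ℝ} (hr : r' < r) (h : closedBall x r ⊆ closure s) : closedBall x r' ⊆ s :=
  calc closedBall x r' ⊆ ball x r := closedBall_subset_ball hr
    _ ⊆ interior (closure s) := interior_maximal (ball_subset_closedBall.trans h) isOpen_ball
    _ = interior s := hs.interior_closure_eq_interior
    _ ⊆ s := interior_subset

end FiniteDimensional

section InnerProductSpace

variable {E : Type*} [NormedAddCommGroup E] [InnerProductSpace ℝ E]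

theorem inner_sub_mul_le_inner_of_mem_closedBall (w : E) {z p : E} {R : ℝ}
    (hp : p ∈ closedBall z R) : ⟪w, z⟫ - ‖w‖ * R ≤ ⟪w, p⟫ := by
  have hsplit : ⟪w, p⟫ = ⟪w, z⟫ + ⟪w, p - z⟫ := by rw [inner_sub_right]; ring
  have hbound : |⟪w, p - z⟫| ≤ ‖w‖ * R :=
    (abs_real_inner_le_norm w (p - z)).trans
      (mul_le_mul_of_nonneg_left (by rwa [← dist_eq_norm]) (norm_nonneg w))
  linarith [neg_abs_le ⟪w, p - z⟫]

theorem exists_closedBall_disjoint_of_notMem [CompleteSpace E] {C : Set E} (hCc : Convex ℝ C)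
    (hCcl : IsClosed C) {y : E} (hy : y ∉ C) {R : ℝ} (hR : 0 ≤ R) :
    ∃ z, dist z y ≤ R ∧ Disjoint (closedBall z R) C := by
  obtain ⟨f, u, hfC, hfy⟩ := geometric_hahn_banach_closed_point hCc hCcl hy
  set w := (InnerProductSpace.toDual ℝ E).symm f
  have hw : ∀ v, ⟪w, v⟫ = f v := fun v => InnerProductSpace.toDual_symm_apply
  -- thanks to `0⁻¹ = 0`, the case `w = 0` (where `C = ∅`) needs no separate treatment
  have hnorm : ‖w‖⁻¹ * ‖w‖ ≤ 1 := inv_mul_le_one_of_le₀ le_rfl (norm_nonneg w)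
  have hnorm_sq : ‖w‖⁻¹ * ‖w‖ ^ 2 = ‖w‖ := by
    rcases eq_or_ne ‖w‖ 0 with h | h
    · simp [h]
    · field_simp
  refine ⟨y + (R * ‖w‖⁻¹) • w, ?_, disjoint_left.mpr fun p hp hpC => ?_⟩
  · rw [dist_eq_norm, add_sub_cancel_left, norm_smul, Real.norm_eq_abs,
      abs_of_nonneg (by positivity), mul_assoc]
    exact mul_le_of_le_one_right hR hnorm
  · have hz : ⟪w, y + (R * ‖w‖⁻¹) • w⟫ = ⟪w, y⟫ + R * ‖w‖ := by
      rw [inner_add_right, real_inner_smul_right, real_inner_self_eq_norm_sq, mul_assoc,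
        hnorm_sq]
    have := inner_sub_mul_le_inner_of_mem_closedBall w hp
    linarith [hfC p hpC, hw p, hw y]

theorem exists_mem_closedBall_forall_notMem [CompleteSpace E] {ι : Type*} {C : ι → Set E}
    (hCc : ∀ i, Convex ℝ (C i)) (hCcl : ∀ i, IsClosed (C i)) {ρ : ℝ}
    (hρ : ∀ i x, ¬ closedBall x ρ ⊆ C i) (s : Finset ι) (x : E) :
    ∃ y ∈ closedBall x ((2 ^ #s - 1) * ρ), ∀ i ∈ s, y ∉ C i := by
  classical
  induction s using Finset.induction_on generalizing x with
  | empty => exact ⟨x, by simp, by simp⟩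
  | insert a s ha ih =>
    obtain ⟨y₀, hy₀x, hy₀a⟩ := not_subset.mp (hρ a x)
    have hρ0 : 0 ≤ ρ := dist_nonneg.trans (mem_closedBall.mp hy₀x)
    have hpow : (1 : ℝ) ≤ 2 ^ #s := one_le_pow₀ one_le_two
    obtain ⟨z, hzy₀, hz⟩ := exists_closedBall_disjoint_of_notMem (hCc a) (hCcl a) hy₀a
      (mul_nonneg (sub_nonneg.mpr hpow) hρ0)
    obtain ⟨y, hyz, hys⟩ := ih z
    refine ⟨y, ?_, fun i hi => ?_⟩
    · rw [mem_closedBall] at hy₀x hyz ⊢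
      rw [card_insert_of_notMem ha, pow_succ]
      linarith [dist_triangle4 y z y₀ x]
    · rcases mem_insert.mp hi with rfl | hi
      exacts [disjoint_left.mp hz hyz, hys i hi]

theorem exists_forall_exists_closedBall_subset_of_subset_iUnion [FiniteDimensional ℝ E]
    {ι : Type*} [Fintype ι] {Q : Set E} {P : ι → Set E} (hP : ∀ i, Convex ℝ (P i))
    (hQ : ∀ R, ∃ x, closedBall x R ⊆ Q) (hcover : Q ⊆ ⋃ i, P i) :
    ∃ i, ∀ R, ∃ x, closedBall x R ⊆ P i := by
  by_contra! h
  choose ρ hρ using h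
  obtain ⟨M, hM⟩ := Finite.exists_le ρ
  have hclosure : ∀ i x, ¬ closedBall x (M + 1) ⊆ closure (P i) := fun i x hsub =>
    hρ i x <| (closedBall_subset_closedBall (hM i)).trans <|
      (hP i).closedBall_subset_of_closedBall_subset_closure (lt_add_one M) hsub
  obtain ⟨x, hx⟩ := hQ ((2 ^ #(univ : Finset ι) - 1) * (M + 1))
  obtain ⟨y, hy, hyP⟩ := exists_mem_closedBall_forall_notMem (fun i => (hP i).closure)
    (fun _ => isClosed_closure) hclosure univ x
  obtain ⟨i, hi⟩ := mem_iUnion.mp (hcover (hx hy))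
  exact hyP i (mem_univ i) (subset_closure hi)

end InnerProductSpace

theorem inradius_eq_top_iff {n : ℕ} {P : Set (EuclideanSpace ℝ (Fin n))} :
    inradius P = ⊤ ↔ ∀ R : ℝ, ∃ x, closedBall x R ⊆ P := by
  constructor
  · intro h R
    have hlt : (R.toNNReal : ℝ≥0∞) < inradius P := h ▸ ENNReal.coe_lt_top
    simp only [inradius, lt_iSup_iff] at hlt
    obtain ⟨x, r, hsub, hRr⟩ := hlt
    refine ⟨x, (closedBall_subset_closedBall ?_).trans hsub⟩
    exact (R.le_coe_toNNReal).trans (mod_cast (ENNReal.coe_lt_coe.mp hRr).le)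
  · refine fun h => ENNReal.eq_top_of_forall_nnreal_le fun r => ?_
    obtain ⟨x, hx⟩ := h r
    exact le_iSup_of_le x (le_iSup_of_le r (le_iSup_of_le hx le_rfl))

theorem IsHalfSpace.convex {n : ℕ} {S : Set (EuclideanSpace ℝ (Fin n))} (h : IsHalfSpace S) :
    Convex ℝ S := by
  obtain ⟨f, -, rfl | rfl | rfl | rfl⟩ := h
  exacts [(convex_Ioi 0).affine_preimage f, (convex_Iio 0).affine_preimage f,
    (convex_Ici 0).affine_preimage f, (convex_Iic 0).affine_preimage f]

theorem IsPolyhedron.convex {n : ℕ} {S : Set (EuclideanSpace ℝ (Fin n))} (h : IsPolyhedron S) :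
    Convex ℝ S := by
  obtain ⟨m, H, hH, rfl⟩ := h
  exact convex_iInter fun i => (hH i).convex

theorem stmt12_general {n k : ℕ} (Q : Set (EuclideanSpace ℝ (Fin n)))
    (P : Fin k → Set (EuclideanSpace ℝ (Fin n)))
    (hP : ∀ i, IsPolyhedron (P i))
    (hcover : Q ⊆ ⋃ i, P i) (hr : inradius Q = ⊤) :
    ∃ i, inradius (P i) = ⊤ := by
  simp only [inradius_eq_top_iff] at hr ⊢
  exact exists_forall_exists_closedBall_subset_of_subset_iUnion (fun i => (hP i).convex) hr hcover

/-- if polyhedra cover a polyhedron of infinite inradius, one of them has infinite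
inradius. -/
theorem stmt12 {n k : ℕ} (Q : Set (EuclideanSpace ℝ (Fin n)))
    (P : Fin k → Set (EuclideanSpace ℝ (Fin n)))
    (hQ : IsPolyhedron Q) (hP : ∀ i, IsPolyhedron (P i))
    (hcover : Q ⊆ ⋃ i, P i) (hr : inradius Q = ⊤) :
    ∃ i, inradius (P i) = ⊤ :=
  stmt12_general Q P hP hcover hr
end

section
/- Let X ⊆ Z^n be a finite union of cosets of subgroups of Z^n each of rank < n, let P ⊆ R^n be a polyhedron with infinite inradius, and let Q_1,...,Q_k be polyhedra in R^n with P ∩ (Z^n \ X) ⊆ Q_1 ∪ ... ∪ Q_k. Then some Q_i has infinite inradius. -/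
open scoped ENNReal

/-- The inclusion of the integer lattice `ℤⁿ` into `ℝⁿ`. -/
def latticeMap {n : ℕ} (z : Fin n → ℤ) : EuclideanSpace ℝ (Fin n) := WithLp.toLp 2 (fun i => (z i : ℝ))

/-!
If every `Qᵢ` had finite inradius `< ρ`, every point of `Qᵢ` would lie in the `ρ`-boundary strip of
one of its half-spaces, since otherwise a `ρ`-ball around it stays inside `Qᵢ`. A coset of a
subgroup of rank `< n` lies in a hyperplane. Hence the lattice points of `P` outside the `Qᵢ`
and `X` would all lie in finitely many slabs `{x | |⟪u, x⟫ - c| ≤ w}` with `u ≠ 0`. This fails: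
fix an integer direction `d` transverse to every slab; a slab contains at most
`⌊2w / |⟪u, d⟫|⌋ + 1` points of a lattice progression `z₀ + s • d`, a bound independent of
`z₀`, and a ball inside `P` large enough contains a progression longer than the sum of these bounds.
-/

open scoped RealInnerProductSpace TensorProduct

theorem Finset.card_le_of_forall_le_add {F : Finset ℕ} {K : ℕ}
    (h : ∀ s ∈ F, ∀ s' ∈ F, s ≤ s' + K) : F.card ≤ K + 1 := by
  rcases F.eq_empty_or_nonempty with rfl | hne
  · simp
  calc F.card ≤ (Finset.Icc (F.min' hne) (F.min' hne + K)).card :=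
        Finset.card_le_card fun s hs =>
          Finset.mem_Icc.mpr ⟨F.min'_le s hs, h s hs _ (F.min'_mem hne)⟩
    _ = K + 1 := by rw [Nat.card_Icc]; omega

theorem Finset.exists_mem_forall_notMem_of_sum_card_lt {ι α : Type*} [Fintype ι] [DecidableEq α]
    {S : Finset α} (F : ι → Finset α) (h : ∑ t, (F t).card < S.card) :
    ∃ s ∈ S, ∀ t, s ∉ F t := by
  by_contra! hS
  have hsub : S ⊆ Finset.univ.biUnion F := fun s hs => by simpa using hS s hs
  exact (Finset.card_le_card hsub |>.trans Finset.card_biUnion_le).not_gt h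

-- `L(M)` lies in the range of the base change `ℝ ⊗[ℤ] M →ₗ[ℝ] E`, of dimension `≤ finrank ℤ M`.
theorem exists_ne_zero_forall_inner_eq_zero {M E : Type*} [AddCommGroup M] [Module.Free ℤ M]
    [Module.Finite ℤ M] [NormedAddCommGroup E] [InnerProductSpace ℝ E] [FiniteDimensional ℝ E]
    (L : M →+ E) (hM : Module.finrank ℤ M < Module.finrank ℝ E) :
    ∃ u ≠ 0, ∀ x, ⟪u, L x⟫ = 0 := by
  set Φ : ℝ ⊗[ℤ] M →ₗ[ℝ] E := L.toIntLinearMap.liftBaseChange ℝ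
  have hΦ : Φ.range ≠ ⊤ := fun htop => by
    have := Φ.finrank_range_le
    rw [htop, finrank_top, Module.finrank_baseChange] at this
    omega
  obtain ⟨u, hu, hu0⟩ :=
    Submodule.exists_mem_ne_zero_of_ne_bot (mt Submodule.orthogonal_eq_bot_iff.mp hΦ)
  refine ⟨u, hu0, fun x => ?_⟩
  have hx : L x ∈ Φ.range := ⟨1 ⊗ₜ x, by simp [Φ]⟩
  exact Submodule.inner_left_of_mem_orthogonal hx hu

theorem latticeMap_add {n : ℕ} (z z' : Fin n → ℤ) :
    latticeMap (z + z') = latticeMap z + latticeMap z' := by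
  ext i; simp [latticeMap]

def latticeHom (n : ℕ) : (Fin n → ℤ) →+ EuclideanSpace ℝ (Fin n) where
  toFun := latticeMap
  map_zero' := by ext i; simp [latticeMap]
  map_add' := latticeMap_add

@[simp] theorem latticeHom_apply {n : ℕ} (z : Fin n → ℤ) : latticeHom n z = latticeMap z := rfl

section Slabs

variable {E : Type*} [NormedAddCommGroup E] [InnerProductSpace ℝ E]

theorem AffineMap.exists_eq_inner_add [FiniteDimensional ℝ E] (f : E →ᵃ[ℝ] ℝ) :
    ∃ v : E, ∀ x, f x = ⟪v, x⟫ + f 0 :=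
  ⟨(InnerProductSpace.toDual ℝ E).symm (LinearMap.toContinuousLinearMap f.linear), fun x => by
    simp [InnerProductSpace.toDual_symm_apply, congrFun f.decomp x]⟩

def slab (u : E) (c w : ℝ) : Set E := {x | |⟪u, x⟫ - c| ≤ w}

def IsSlab (T : Set E) : Prop := ∃ u ≠ 0, ∃ c w : ℝ, T = slab u c w

def CoveredBySlabs (S : Set E) : Prop :=
  ∃ 𝒯 : Set (Set E), 𝒯.Finite ∧ (∀ T ∈ 𝒯, IsSlab T) ∧ S ⊆ ⋃₀ 𝒯

theorem CoveredBySlabs.union {S S' : Set E} (hS : CoveredBySlabs S) (hS' : CoveredBySlabs S') :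
    CoveredBySlabs (S ∪ S') := by
  obtain ⟨𝒯, hfin, hslab, hsub⟩ := hS
  obtain ⟨𝒯', hfin', hslab', hsub'⟩ := hS'
  refine ⟨𝒯 ∪ 𝒯', hfin.union hfin', fun T hT => hT.elim (hslab T) (hslab' T), ?_⟩
  rw [Set.sUnion_union]
  exact Set.union_subset_union hsub hsub'

theorem CoveredBySlabs.iUnion {ι : Type*} [Finite ι] {S : ι → Set E}
    (hS : ∀ i, CoveredBySlabs (S i)) : CoveredBySlabs (⋃ i, S i) := by
  choose 𝒯 hfin hslab hsub using hS
  refine ⟨⋃ i, 𝒯 i, Set.finite_iUnion hfin, fun T hT => ?_, ?_⟩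
  · obtain ⟨i, hi⟩ := Set.mem_iUnion.mp hT
    exact hslab i T hi
  · rw [Set.sUnion_iUnion]
    exact Set.iUnion_mono hsub

open Classical in
theorem card_filter_add_smul_mem_slab_le {u v : E} (huv : ⟪u, v⟫ ≠ 0) (p : E) (c w : ℝ)
    (S : Finset ℕ) :
    (S.filter fun s : ℕ => p + (s : ℝ) • v ∈ slab u c w).card ≤ ⌊2 * w / |⟪u, v⟫|⌋₊ + 1 := by
  refine Finset.card_le_of_forall_le_add fun s hs s' hs' => ?_
  simp only [Finset.mem_filter, slab, Set.mem_ofPred_eq, inner_add_right,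
    real_inner_smul_right] at hs hs'
  rcases le_total s s' with hss' | hs's
  · omega
  have hdiff : ((s - s' : ℕ) : ℝ) * |⟪u, v⟫| ≤ 2 * w := by
    rw [Nat.cast_sub hs's, ← abs_of_nonneg (sub_nonneg.mpr (Nat.cast_le.mpr hs's)), ← abs_mul]
    calc |((s : ℝ) - s') * ⟪u, v⟫|
        = |(⟪u, p⟫ + s * ⟪u, v⟫ - c) - (⟪u, p⟫ + s' * ⟪u, v⟫ - c)| := by congr 1; ring
      _ ≤ |⟪u, p⟫ + s * ⟪u, v⟫ - c| + |⟪u, p⟫ + s' * ⟪u, v⟫ - c| := abs_sub _ _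
      _ ≤ 2 * w := by linarith [hs.2, hs'.2]
  have := Nat.le_floor ((le_div_iff₀ (abs_pos.mpr huv)).mpr hdiff)
  omega

end Slabs

-- Off the slab `|f x| > ρ‖v‖`, while `f` varies by at most `ρ‖v‖` on the `ρ`-ball around `x`,
-- so `f` keeps its strict sign there.
theorem IsHalfSpace.subset_slab_union {n : ℕ} {S : Set (EuclideanSpace ℝ (Fin n))}
    (hS : IsHalfSpace S) (ρ : ℝ) :
    ∃ T, IsSlab T ∧ S ⊆ T ∪ {x | Metric.closedBall x ρ ⊆ S} := by
  obtain ⟨f, hf, hS⟩ := hS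
  obtain ⟨v, hv⟩ := f.exists_eq_inner_add
  have hv0 : v ≠ 0 := by
    rintro rfl
    exact hf ⟨f 0, fun x => by simp [hv x]⟩
  refine ⟨slab v (-f 0) (ρ * ‖v‖), ⟨v, hv0, _, _, rfl⟩, fun x hx => ?_⟩
  refine or_iff_not_imp_left.mpr fun hxT y hy => ?_
  have hfx : ρ * ‖v‖ < |f x| := by
    rw [hv x]; simpa [slab] using hxT
  have hρ : 0 ≤ ρ * ‖v‖ :=
    mul_nonneg (dist_nonneg.trans (Metric.mem_closedBall.mp hy)) (norm_nonneg v)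
  have hfy : |f y - f x| ≤ ρ * ‖v‖ := by
    rw [hv y, hv x, add_sub_add_right_eq_sub, ← inner_sub_right, mul_comm]
    exact (abs_real_inner_le_norm v (y - x)).trans
      (mul_le_mul_of_nonneg_left (by simpa [dist_eq_norm] using hy) (norm_nonneg v))
  rw [abs_le] at hfy
  rcases hS with rfl | rfl | rfl | rfl <;> simp only [Set.mem_ofPred_eq] at hx ⊢ <;>
    rcases abs_cases (f x) with ⟨h, _⟩ | ⟨h, _⟩ <;> linarith

section Inradius

variable {n : ℕ} {P : Set (EuclideanSpace ℝ (Fin n))}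

theorem ofReal_le_inradius {x : EuclideanSpace ℝ (Fin n)} {r : ℝ}
    (h : Metric.closedBall x r ⊆ P) : ENNReal.ofReal r ≤ inradius P := by
  rcases le_total r 0 with hr | hr
  · simp [ENNReal.ofReal_of_nonpos hr]
  · exact le_iSup_of_le x <| le_iSup_of_le r.toNNReal <|
      le_iSup_of_le (by rwa [Real.coe_toNNReal r hr]) le_rfl

theorem exists_closedBall_subset_of_inradius_eq_top (hP : inradius P = ⊤) (R : ℝ) :
    ∃ x, Metric.closedBall x R ⊆ P := by
  have : ENNReal.ofReal R < inradius P := hP ▸ ENNReal.ofReal_lt_top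
  simp only [inradius, lt_iSup_iff] at this
  obtain ⟨x, r, hr, hRr⟩ := this
  refine ⟨x, (Metric.closedBall_subset_closedBall ?_).trans hr⟩
  rw [← ENNReal.ofReal_coe_nnreal, ENNReal.ofReal_lt_ofReal_iff'] at hRr
  exact hRr.1.le

end Inradius

theorem IsPolyhedron.coveredBySlabs {n : ℕ} {Q : Set (EuclideanSpace ℝ (Fin n))}
    (hQ : IsPolyhedron Q) (hfin : inradius Q ≠ ⊤) : CoveredBySlabs Q := by
  obtain ⟨m, S, hS, rfl⟩ := hQ
  set ρ := (inradius (⋂ i, S i)).toReal + 1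
  choose T hT hST using fun i => (hS i).subset_slab_union ρ
  refine ⟨Set.range T, Set.finite_range T, Set.forall_mem_range.mpr hT, fun x hx => ?_⟩
  by_contra hxT
  have hball : Metric.closedBall x ρ ⊆ ⋂ i, S i := Set.subset_iInter fun i =>
    ((hST i (Set.mem_iInter.mp hx i)).resolve_left fun h => hxT ⟨T i, ⟨i, rfl⟩, h⟩)
  have := (ENNReal.ofReal_le_iff_le_toReal hfin).mp (ofReal_le_inradius hball)
  linarith

theorem coveredBySlabs_image_coset {n : ℕ} (a : Fin n → ℤ) (H : AddSubgroup (Fin n → ℤ))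
    (hH : Module.finrank ℤ H < n) :
    CoveredBySlabs (latticeMap '' ((a + ·) '' (H : Set (Fin n → ℤ)))) := by
  obtain ⟨u, hu0, hu⟩ := exists_ne_zero_forall_inner_eq_zero
    ((latticeHom n).comp H.toIntSubmodule.subtype.toAddMonoidHom)
    (by rwa [finrank_euclideanSpace_fin])
  refine ⟨{slab u ⟪u, latticeMap a⟫ 0}, Set.finite_singleton _,
    fun T hT => ⟨u, hu0, _, _, hT⟩, ?_⟩
  rintro _ ⟨_, ⟨h, hh, rfl⟩, rfl⟩
  simpa [slab, latticeMap_add, inner_add_right] using hu ⟨h, hh⟩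

open Polynomial in
noncomputable def polyOfCoeffs {n : ℕ} (u : Fin n → ℝ) : ℝ[X] :=
  ∑ i : Fin n, monomial (i : ℕ) (u i)

theorem polyOfCoeffs_ne_zero {n : ℕ} {u : Fin n → ℝ} (hu : u ≠ 0) : polyOfCoeffs u ≠ 0 := by
  intro h
  refine hu (funext fun i => ?_)
  simpa [polyOfCoeffs, Polynomial.finsetSum_coeff, Polynomial.coeff_monomial, Fin.val_inj]
    using congrArg (Polynomial.coeff · i) h

theorem inner_latticeMap_pow {n : ℕ} (u : EuclideanSpace ℝ (Fin n)) (s : ℤ) :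
    ⟪u, latticeMap (fun i => s ^ (i : ℕ))⟫ = (polyOfCoeffs u.ofLp).eval (s : ℝ) := by
  simp [polyOfCoeffs, latticeMap, PiLp.inner_apply, Polynomial.eval_finsetSum, mul_comm]

-- `d = (1, s, s², …)`: `⟪u, d⟫` is a nonzero polynomial in `s`, so all but finitely many `s` work.
theorem exists_forall_inner_latticeMap_ne_zero {n : ℕ} {ι : Type*} [Finite ι]
    (u : ι → EuclideanSpace ℝ (Fin n)) (hu : ∀ t, u t ≠ 0) :
    ∃ d : Fin n → ℤ, ∀ t, ⟪u t, latticeMap d⟫ ≠ 0 := by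
  have hroots : ∀ t, {s : ℤ | (polyOfCoeffs (u t).ofLp).IsRoot s}.Finite := fun t =>
    (Polynomial.finite_setOfPred_isRoot (polyOfCoeffs_ne_zero (by simpa using hu t))).preimage
      Int.cast_injective.injOn
  obtain ⟨s, hs⟩ := (Set.finite_iUnion hroots).infinite_compl.nonempty
  refine ⟨fun i => s ^ (i : ℕ), fun t h => hs (Set.mem_iUnion.mpr ⟨t, ?_⟩)⟩
  rwa [inner_latticeMap_pow] at h

theorem exists_dist_latticeMap_le {n : ℕ} (x : EuclideanSpace ℝ (Fin n)) :
    ∃ z, dist (latticeMap z) x ≤ √n := by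
  refine ⟨fun i => ⌊x i⌋, ?_⟩
  rw [EuclideanSpace.dist_eq]
  refine Real.sqrt_le_sqrt ?_
  calc ∑ i, dist (latticeMap (fun i => ⌊x i⌋) i) (x i) ^ 2 ≤ ∑ _i : Fin n, (1 : ℝ) := by
        refine Finset.sum_le_sum fun i _ => pow_le_one₀ dist_nonneg ?_
        rw [dist_comm, Real.dist_eq, latticeMap, PiLp.toLp_apply, abs_of_nonneg
          (sub_nonneg.mpr (Int.floor_le _))]
        exact (Int.fract_lt_one _).le
    _ = n := by simp

theorem exists_latticeMap_mem_forall_notMem_slab {n : ℕ} {ι : Type*} [Fintype ι]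
    {P : Set (EuclideanSpace ℝ (Fin n))} (hP : inradius P = ⊤)
    (u : ι → EuclideanSpace ℝ (Fin n)) (hu : ∀ t, u t ≠ 0) (c w : ι → ℝ) :
    ∃ z, latticeMap z ∈ P ∧ ∀ t, latticeMap z ∉ slab (u t) (c t) (w t) := by
  classical
  obtain ⟨d, hd⟩ := exists_forall_inner_latticeMap_ne_zero u hu
  set N := ∑ t, (⌊2 * w t / |⟪u t, latticeMap d⟫|⌋₊ + 1)
  obtain ⟨x, hx⟩ := exists_closedBall_subset_of_inradius_eq_top hP (√n + N * ‖latticeMap d‖)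
  obtain ⟨z₀, hz₀⟩ := exists_dist_latticeMap_le x
  have hline : ∀ s : ℕ, latticeMap (z₀ + s • d) = latticeMap z₀ + (s : ℝ) • latticeMap d :=
    fun s => by ext i; simp [latticeMap]
  obtain ⟨s, hs, hsF⟩ := Finset.exists_mem_forall_notMem_of_sum_card_lt
    (S := Finset.range (N + 1))
    (fun t => (Finset.range (N + 1)).filter
      fun s : ℕ => latticeMap z₀ + (s : ℝ) • latticeMap d ∈ slab (u t) (c t) (w t))
    (by simpa using (Finset.sum_le_sum fun t _ => card_filter_add_smul_mem_slab_le (hd t)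
      (latticeMap z₀) (c t) (w t) (Finset.range (N + 1))).trans_lt (Nat.lt_succ_self N))
  refine ⟨z₀ + s • d, hx ?_, fun t h => hsF t (Finset.mem_filter.mpr ⟨hs, hline s ▸ h⟩)⟩
  rw [hline, Metric.mem_closedBall]
  calc dist (latticeMap z₀ + (s : ℝ) • latticeMap d) x
      ≤ dist (latticeMap z₀ + (s : ℝ) • latticeMap d) (latticeMap z₀) + dist (latticeMap z₀) x :=
        dist_triangle _ _ _
    _ ≤ N * ‖latticeMap d‖ + √n := by
        rw [dist_self_add_left, norm_smul, Real.norm_natCast]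
        gcongr
        exact_mod_cast Finset.mem_range_succ_iff.mp hs
    _ = √n + N * ‖latticeMap d‖ := add_comm _ _

theorem exists_latticeMap_mem_diff_of_coveredBySlabs {n : ℕ}
    {P S : Set (EuclideanSpace ℝ (Fin n))} (hP : inradius P = ⊤) (hS : CoveredBySlabs S) :
    ∃ z, latticeMap z ∈ P \ S := by
  obtain ⟨𝒯, hfin, hslab, hsub⟩ := hS
  have := hfin.fintype
  choose u hu c w hT using fun T : 𝒯 => hslab T T.2
  obtain ⟨z, hzP, hz⟩ := exists_latticeMap_mem_forall_notMem_slab hP u hu c w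
  refine ⟨z, hzP, fun hzS => ?_⟩
  obtain ⟨T, hT𝒯, hzT⟩ := hsub hzS
  exact hz ⟨T, hT𝒯⟩ (hT ⟨T, hT𝒯⟩ ▸ hzT)

theorem stmt14_general {n m k : ℕ} (X : Set (Fin n → ℤ))
    (a : Fin m → (Fin n → ℤ)) (H : Fin m → AddSubgroup (Fin n → ℤ))
    (hrk : ∀ i, Module.finrank ℤ (H i) < n)
    (hX : X = ⋃ i, (a i + ·) '' ((H i : Set (Fin n → ℤ))))
    (P : Set (EuclideanSpace ℝ (Fin n))) (hPr : inradius P = ⊤)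
    (Q : Fin k → Set (EuclideanSpace ℝ (Fin n))) (hQ : ∀ i, IsPolyhedron (Q i))
    (hcover : P ∩ (latticeMap '' Xᶜ) ⊆ ⋃ i, Q i) :
    ∃ i, inradius (Q i) = ⊤ := by
  by_contra! hQr
  have hXslabs : CoveredBySlabs (latticeMap '' X) := by
    rw [hX, Set.image_iUnion]
    exact .iUnion fun i => coveredBySlabs_image_coset (a i) (H i) (hrk i)
  obtain ⟨z, hzP, hz⟩ := exists_latticeMap_mem_diff_of_coveredBySlabs hPr
    ((CoveredBySlabs.iUnion fun i => (hQ i).coveredBySlabs (hQr i)).union hXslabs)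
  by_cases hzX : z ∈ X
  · exact hz (Or.inr ⟨z, hzX, rfl⟩)
  · exact hz (Or.inl (hcover ⟨hzP, z, hzX, rfl⟩))

/-- if `X ⊆ ℤⁿ` is a finite union of cosets of rank `< n`, `P` is a polyhedron of
infinite inradius, and polyhedra `Q₁,...,Q_k` cover `P ∩ (ℤⁿ \ X)`, then some `Qᵢ` has infinite
inradius. -/
theorem stmt14 {n m k : ℕ} (X : Set (Fin n → ℤ))
    (a : Fin m → (Fin n → ℤ)) (H : Fin m → AddSubgroup (Fin n → ℤ))
    (hrk : ∀ i, Module.finrank ℤ (H i) < n)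
    (hX : X = ⋃ i, (a i + ·) '' ((H i : Set (Fin n → ℤ))))
    (P : Set (EuclideanSpace ℝ (Fin n))) (hP : IsPolyhedron P) (hPr : inradius P = ⊤)
    (Q : Fin k → Set (EuclideanSpace ℝ (Fin n))) (hQ : ∀ i, IsPolyhedron (Q i))
    (hcover : P ∩ (latticeMap '' Xᶜ) ⊆ ⋃ i, Q i) :
    ∃ i, inradius (Q i) = ⊤ :=
  stmt14_general X a H hrk hX P hPr Q hQ hcover
end
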